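/- b_⋔ ≤ non(M), where b_⋔ is the least cardinality of a ⋔-unbounded family in 2^ω and non(M) is the least cardinality of a non-meager subset of 2^ω. -/

import Mathlib

open Filter Set Cardinal

/-- The interval partition of ℕ with |Iₙ| = 2^(n+1): Iₙ = [2^(n+1) - 2, 2^(n+2) - 2). -/
def intervalI (n : ℕ) : Set ℕ := Set.Ico (2 ^ (n + 1) - 2) (2 ^ (n + 2) - 2)

/-- f ⋔ g iff for all but finitely many k, f↾Iₖ ≠ g↾Iₖ. -/
def Fork (f g : ℕ → Bool) : Prop := ∀ᶠ k in atTop, ∃ j ∈ intervalI k, f j ≠ g j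

/-!
For fixed `g`, the set of `f` with `f ⋔ g` is the union over `N` of the closed sets of `f` that
differ from `g` on every block `Iₖ`, `k ≥ N`. Each of these has dense complement: overwriting `f`
by `g` on the block `Iₖ` leaves it, and these modifications converge to `f` as `k → ∞` because
every coordinate eventually lies outside `Iₖ`. Hence `{f | f ⋔ g}` is meagre, so a non-meagre set
contains, for every `g`, some `f` with `¬ f ⋔ g`: it is `⋔`-unbounded.
-/

section EventuallyDifferentOnBlocks

variable {ι X : Type*} [TopologicalSpace X] (g : ι → X) (I : ℕ → Set ι)

theorem isClosed_setOf_forall_ge_exists_ne [DiscreteTopology X] (hI : ∀ k, (I k).Finite) (N : ℕ) :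
    IsClosed {f : ι → X | ∀ k ≥ N, ∃ j ∈ I k, f j ≠ g j} := by
  have hinter : {f : ι → X | ∀ k ≥ N, ∃ j ∈ I k, f j ≠ g j} =
      ⋂ k ≥ N, ⋃ j ∈ I k, (fun f : ι → X => f j) ⁻¹' {g j}ᶜ := by
    ext f
    simp
  rw [hinter]
  refine isClosed_biInter fun k _ => ?_
  exact (hI k).isClosed_biUnion fun j _ =>
    (isClosed_discrete {g j}ᶜ).preimage (continuous_apply j)

theorem dense_compl_setOf_forall_ge_exists_ne (hI : ∀ j, ∀ᶠ k in atTop, j ∉ I k) (N : ℕ) :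
    Dense {f : ι → X | ∀ k ≥ N, ∃ j ∈ I k, f j ≠ g j}ᶜ := by
  classical
  intro f
  have hlim : Tendsto (fun k => (I k).piecewise g f) atTop (nhds f) :=
    tendsto_pi_nhds.2 fun j => tendsto_const_nhds.congr' <|
      (hI j).mono fun k hk => (piecewise_eq_of_notMem _ _ _ hk).symm
  refine mem_closure_of_tendsto hlim ((eventually_ge_atTop N).mono fun k hk hmem => ?_)
  obtain ⟨j, hj, hne⟩ := hmem k hk
  exact hne (piecewise_eq_of_mem _ _ _ hj)

theorem isMeagre_setOf_eventually_exists_ne [DiscreteTopology X] (hfin : ∀ k, (I k).Finite)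
    (hI : ∀ j, ∀ᶠ k in atTop, j ∉ I k) :
    IsMeagre {f : ι → X | ∀ᶠ k in atTop, ∃ j ∈ I k, f j ≠ g j} := by
  have hunion : {f : ι → X | ∀ᶠ k in atTop, ∃ j ∈ I k, f j ≠ g j} =
      ⋃ N, {f : ι → X | ∀ k ≥ N, ∃ j ∈ I k, f j ≠ g j} := by
    ext f
    simp only [mem_ofPred_eq, eventually_atTop, mem_iUnion]
  rw [hunion]
  refine isMeagre_iUnion fun N => IsNowhereDense.isMeagre ?_
  rw [(isClosed_setOf_forall_ge_exists_ne g I hfin N).isNowhereDense_iff,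
    interior_eq_empty_iff_dense_compl]
  exact dense_compl_setOf_forall_ge_exists_ne g I hI N

end EventuallyDifferentOnBlocks

theorem eventually_notMem_intervalI (j : ℕ) : ∀ᶠ k in atTop, j ∉ intervalI k := by
  filter_upwards [eventually_ge_atTop (j + 1)] with k hk hj
  have hj_lt : j < 2 ^ j := Nat.lt_two_pow_self
  have hpow : 2 ^ (j + 2) ≤ 2 ^ (k + 1) := Nat.pow_le_pow_right (by norm_num) (by omega)
  have hfour : 2 ^ (j + 2) = 4 * 2 ^ j := by ring
  have hlow : 2 ^ (k + 1) - 2 ≤ j := hj.1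
  omega

theorem isMeagre_setOf_fork (g : ℕ → Bool) : IsMeagre {f | Fork f g} :=
  isMeagre_setOf_eventually_exists_ne g intervalI (fun _ => finite_Ico _ _)
    eventually_notMem_intervalI

/-- b_⋔ ≤ non(M) on Cantor space. -/
theorem stmt8 :
    sInf {c : Cardinal | ∃ F : Set (ℕ → Bool), #F = c ∧
        ∀ g : ℕ → Bool, ∃ f ∈ F, ¬ Fork f g} ≤
      sInf {c : Cardinal | ∃ S : Set (ℕ → Bool), #S = c ∧ ¬ IsMeagre S} := by
  refine csInf_le_csInf' ⟨_, univ, rfl, not_isMeagre_of_isOpen isOpen_univ univ_nonempty⟩ ?_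
  rintro _ ⟨S, rfl, hS⟩
  refine ⟨S, rfl, fun g => ?_⟩
  by_contra! hfork
  exact hS ((isMeagre_setOf_fork g).mono hfork)
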